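/- arXiv:1702.08486 — 2 statements merged into one kernel-verified Lean document; each statement's English description precedes it below -/
import Mathlib

section
/- Minkowski inequality for upper Burkill integrals: for p ≥ 1 and interval functions g₁, g₂, (upper ∫_R |g₁ + g₂|^p)^{1/p} ≤ (upper ∫_R |g₁|^p)^{1/p} + (upper ∫_R |g₂|^p)^{1/p}, assuming the right-hand side quantities are finite. -/
/-!
On every division the discrete Minkowski inequality bounds the `p`-th power sum of `g₁ + g₂`
by `(s₁^{1/p} + s₂^{1/p})^p`, where `s₁, s₂` are those of `g₁, g₂`. This expression is monotone and
continuous in `(s₁, s₂)`, so the bound passes to the limsup along any Riemann succession and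
then to the supremum defining the upper integral.
-/

open Filter Finset

/-- A division of the interval `[a, b]` into finitely many non-overlapping
subintervals, given by division points `P 0 = a < P 1 < ⋯ < P n = b`. -/
structure Division (a b : ℝ) where
  n : ℕ
  P : ℕ → ℝ
  npos : 0 < n
  mono : ∀ i < n, P i < P (i + 1)
  first : P 0 = a
  last : P n = b

/-- The Riemann sum of the interval function `g` over the division `D`. -/
def Division.sum {a b : ℝ} (D : Division a b) (g : ℝ → ℝ → ℝ) : ℝ :=
  ∑ i ∈ Finset.range D.n, g (D.P i) (D.P (i + 1))

/-- `D.normLt e` means that the norm (mesh) of the division `D` is `< e`. -/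
def Division.normLt {a b : ℝ} (D : Division a b) (e : ℝ) : Prop :=
  ∀ i < D.n, D.P (i + 1) - D.P i < e

/-- A Riemann succession: a sequence of divisions whose norms tend to `0`. -/
def IsRiemannSuccession {a b : ℝ} (D : ℕ → Division a b) : Prop :=
  ∀ e > 0, ∃ N, ∀ n ≥ N, (D n).normLt e

/-- The upper Burkill integral of `g` over `[a, b]` (with respect to the family
of all Riemann successions): the supremum over all Riemann successions of the
limsup of the Riemann sums. -/
noncomputable def upperBurkill (g : ℝ → ℝ → ℝ) (a b : ℝ) : EReal :=
  sSup {L : EReal | ∃ D : ℕ → Division a b, IsRiemannSuccession D ∧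
    L = Filter.limsup (fun n => (((D n).sum g : ℝ) : EReal)) Filter.atTop}

/-- The lower Burkill integral of `g` over `[a, b]`: the infimum over all
Riemann successions of the liminf of the Riemann sums. -/
noncomputable def lowerBurkill (g : ℝ → ℝ → ℝ) (a b : ℝ) : EReal :=
  sInf {L : EReal | ∃ D : ℕ → Division a b, IsRiemannSuccession D ∧
    L = Filter.liminf (fun n => (((D n).sum g : ℝ) : EReal)) Filter.atTop}

open Topology

lemma le_rpow_add_rpow_of_rpow_inv_le {p u s t B C : ℝ} (hp : 0 < p) (hu : 0 ≤ u)
    (hs : 0 ≤ s) (ht : 0 ≤ t) (h : u ^ (1 / p) ≤ s ^ (1 / p) + t ^ (1 / p))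
    (hsB : s ≤ B) (htC : t ≤ C) :
    u ≤ (B ^ (1 / p) + C ^ (1 / p)) ^ p :=
  calc u = (u ^ (1 / p)) ^ p := by
        rw [← Real.rpow_mul hu, one_div_mul_cancel hp.ne', Real.rpow_one]
    _ ≤ (s ^ (1 / p) + t ^ (1 / p)) ^ p := by gcongr
    _ ≤ (B ^ (1 / p) + C ^ (1 / p)) ^ p := by gcongr

lemma limsup_le_rpow_add_rpow_of_rpow_inv_le {ι : Type*} {l : Filter ι} {p B C : ℝ} (hp : 0 < p)
    {u s t : ι → ℝ} (hu : ∀ i, 0 ≤ u i) (hs : ∀ i, 0 ≤ s i) (ht : ∀ i, 0 ≤ t i)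
    (h : ∀ i, u i ^ (1 / p) ≤ s i ^ (1 / p) + t i ^ (1 / p))
    (hsB : limsup (fun i => (s i : EReal)) l ≤ B) (htC : limsup (fun i => (t i : EReal)) l ≤ C) :
    limsup (fun i => (u i : EReal)) l ≤ ((B ^ (1 / p) + C ^ (1 / p)) ^ p : ℝ) := by
  set bound : ℝ → ℝ := fun ε => ((B + ε) ^ (1 / p) + (C + ε) ^ (1 / p)) ^ p
  have le_bound : ∀ ε > 0, limsup (fun i => (u i : EReal)) l ≤ bound ε := by
    intro ε hε
    have hs_lt : ∀ᶠ i in l, (s i : EReal) < (B + ε : ℝ) :=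
      eventually_lt_of_limsup_lt (hsB.trans_lt (by exact_mod_cast lt_add_of_pos_right B hε))
    have ht_lt : ∀ᶠ i in l, (t i : EReal) < (C + ε : ℝ) :=
      eventually_lt_of_limsup_lt (htC.trans_lt (by exact_mod_cast lt_add_of_pos_right C hε))
    refine limsup_le_of_le (h := ?_)
    filter_upwards [hs_lt, ht_lt] with i hsi hti
    exact EReal.coe_le_coe_iff.2 <| le_rpow_add_rpow_of_rpow_inv_le hp (hu i) (hs i) (ht i) (h i)
      (EReal.coe_lt_coe_iff.1 hsi).le (EReal.coe_lt_coe_iff.1 hti).le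
  have bound_cont : Continuous bound := by fun_prop (disch := positivity)
  have tendsto_bound : Tendsto (fun ε => (bound ε : EReal)) (𝓝[>] 0) (𝓝 (bound 0)) :=
    (continuous_coe_real_ereal.tendsto _).comp (bound_cont.tendsto 0) |>.mono_left
      nhdsWithin_le_nhds
  simpa [bound] using ge_of_tendsto tendsto_bound (eventually_mem_nhdsWithin.mono le_bound)

namespace Division

variable {a b : ℝ}

lemma sum_nonneg (D : Division a b) {g : ℝ → ℝ → ℝ} (hg : ∀ x y, 0 ≤ g x y) : 0 ≤ D.sum g :=
  Finset.sum_nonneg fun _ _ => hg _ _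

lemma sum_rpow_abs_add_le (D : Division a b) (g₁ g₂ : ℝ → ℝ → ℝ) {p : ℝ} (hp : 1 ≤ p) :
    D.sum (fun x y => |g₁ x y + g₂ x y| ^ p) ^ (1 / p) ≤
      D.sum (fun x y => |g₁ x y| ^ p) ^ (1 / p) + D.sum (fun x y => |g₂ x y| ^ p) ^ (1 / p) :=
  Real.Lp_add_le _ _ _ hp

end Division

lemma IsRiemannSuccession.limsup_le_upperBurkill {a b : ℝ} {D : ℕ → Division a b}
    (hD : IsRiemannSuccession D) (g : ℝ → ℝ → ℝ) :
    limsup (fun n => ((D n).sum g : EReal)) atTop ≤ upperBurkill g a b :=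
  le_sSup ⟨D, hD, rfl⟩

theorem upperBurkill_minkowski_general (g₁ g₂ : ℝ → ℝ → ℝ) (a b p : ℝ)
    (hp : 1 ≤ p) (B C : ℝ)
    (hB : upperBurkill (fun x y => |g₁ x y| ^ p) a b = (B : EReal))
    (hC : upperBurkill (fun x y => |g₂ x y| ^ p) a b = (C : EReal)) :
    upperBurkill (fun x y => |g₁ x y + g₂ x y| ^ p) a b
      ≤ (((B ^ (1 / p) + C ^ (1 / p)) ^ p : ℝ) : EReal) := by
  refine sSup_le ?_
  rintro _ ⟨D, hD, rfl⟩
  have rpow_abs_nonneg : ∀ g : ℝ → ℝ → ℝ, ∀ x y, 0 ≤ |g x y| ^ p := fun _ _ _ =>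
    Real.rpow_nonneg (abs_nonneg _) _
  exact limsup_le_rpow_add_rpow_of_rpow_inv_le (by linarith)
    (fun n => (D n).sum_nonneg (rpow_abs_nonneg _)) (fun n => (D n).sum_nonneg (rpow_abs_nonneg _))
    (fun n => (D n).sum_nonneg (rpow_abs_nonneg _)) (fun n => (D n).sum_rpow_abs_add_le g₁ g₂ hp)
    (hB ▸ hD.limsup_le_upperBurkill _) (hC ▸ hD.limsup_le_upperBurkill _)

/-- (2.20a): Minkowski inequality for upper Burkill integrals: for `p ≥ 1`,
`(upper ∫ |g₁ + g₂|^p)^{1/p} ≤ (upper ∫ |g₁|^p)^{1/p} + (upper ∫ |g₂|^p)^{1/p}`,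
assuming the right-hand side quantities are finite.  (Stated equivalently with both
sides raised to the `p`-th power, so as to remain in the extended reals.) -/
theorem upperBurkill_minkowski (g₁ g₂ : ℝ → ℝ → ℝ) (a b p : ℝ) (hab : a < b)
    (hp : 1 ≤ p) (B C : ℝ)
    (hB : upperBurkill (fun x y => |g₁ x y| ^ p) a b = (B : EReal))
    (hC : upperBurkill (fun x y => |g₂ x y| ^ p) a b = (C : EReal)) :
    upperBurkill (fun x y => |g₁ x y + g₂ x y| ^ p) a b
      ≤ (((B ^ (1 / p) + C ^ (1 / p)) ^ p : ℝ) : EReal) :=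
  upperBurkill_minkowski_general g₁ g₂ a b p hp B C hB hC
end

section
/- If an interval function g is absolutely continuous on R and g ≥ 0, then the upper norm-limit of g over R is finite. Consequently, every absolutely continuous interval function (not necessarily nonnegative) has finite upper and lower norm-limits and finite variation, i.e., absolute continuity implies bounded variation. -/
/-!
Absolute continuity with `ε = 1` gives `δ > 0` such that non-overlapping intervals of total
length `< δ` carry `|∑ g| < 1`, hence, splitting them by the sign of `g`, `∑ |g| < 2`. Cut
`[c, d]` into cells of length `δ / 2`. In a division of norm `< δ / 2` the intervals whose left
ends lie in one cell fit into two consecutive cells, so their total length is `< δ` and they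
contribute less than `2` to `∑ |g|`. Hence `∑ |g| ≤ 2 (⌊2 (d - c) / δ⌋ + 1)` for every such
division, which bounds the variation and, from both sides, every Riemann sum of a fine division,
so both norm-limits are finite.
-/

open Filter Finset

/-- The upper norm-limit of `g` over `[a, b]`: the limit as `e → 0⁺` (equivalently,
the infimum over `e > 0`) of the supremum of Riemann sums over divisions of norm `< e`. -/
noncomputable def upperNormLimit (g : ℝ → ℝ → ℝ) (a b : ℝ) : EReal :=
  ⨅ e : {e : ℝ // 0 < e},
    sSup {s : EReal | ∃ D : Division a b, D.normLt e.1 ∧ s = ((D.sum g : ℝ) : EReal)}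

/-- The lower norm-limit of `g` over `[a, b]`. -/
noncomputable def lowerNormLimit (g : ℝ → ℝ → ℝ) (a b : ℝ) : EReal :=
  ⨆ e : {e : ℝ // 0 < e},
    sInf {s : EReal | ∃ D : Division a b, D.normLt e.1 ∧ s = ((D.sum g : ℝ) : EReal)}

/-- The variation `Var(g; [a,b])`: the norm-limit of `∑ |g(I)|`. -/
noncomputable def variation (g : ℝ → ℝ → ℝ) (a b : ℝ) : EReal :=
  ⨅ e : {e : ℝ // 0 < e},
    sSup {s : EReal | ∃ D : Division a b, D.normLt e.1 ∧
      s = ((∑ i ∈ Finset.range D.n, |g (D.P i) (D.P (i + 1))| : ℝ) : EReal)}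

/-- `g` is absolutely continuous on `[c, d]`: for every `ε > 0` there is `δ > 0` such that
every finite collection of non-overlapping subintervals of `[c, d]` of total length `< δ`
has `|∑ g(Iᵢ)| < ε`. -/
def AbsolutelyContinuousIF (g : ℝ → ℝ → ℝ) (c d : ℝ) : Prop :=
  ∀ ε > (0 : ℝ), ∃ δ > (0 : ℝ), ∀ (m : ℕ) (a b : ℕ → ℝ),
    (∀ i < m, c ≤ a i ∧ a i < b i ∧ b i ≤ d) →
    (∀ i < m, ∀ j < m, i ≠ j → b i ≤ a j ∨ b j ≤ a i) →
    (∑ i ∈ Finset.range m, (b i - a i)) < δ →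
    |∑ i ∈ Finset.range m, g (a i) (b i)| < ε

theorem Finset.exists_bijOn_range_card {ι : Type*} [Nonempty ι] (s : Finset ι) :
    ∃ σ : ℕ → ι, Set.BijOn σ (range #s) s := by
  let σ : ℕ → ι := fun k => if h : k < #s then s.equivFin.symm ⟨k, h⟩ else Classical.arbitrary ι
  refine ⟨σ, fun k hk => ?_, fun k hk l hl hkl => ?_, fun x hx => ?_⟩
  · have hk : k < #s := by simpa using hk
    simp [σ, hk]
  · have hk : k < #s := by simpa using hk
    have hl : l < #s := by simpa using hl
    simpa [σ, hk, hl, Subtype.ext_iff, Fin.ext_iff] using hkl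
  · refine ⟨s.equivFin ⟨x, hx⟩, by simp, ?_⟩
    simp [σ]

theorem Finset.sum_abs_lt_two_mul {ι : Type*} {s : Finset ι} {f : ι → ℝ} {C : ℝ}
    (h : ∀ t ⊆ s, |∑ i ∈ t, f i| < C) : ∑ i ∈ s, |f i| < 2 * C := by
  have hpos := h _ (filter_subset (fun i => 0 ≤ f i) s)
  have hneg := h _ (filter_subset (fun i => ¬0 ≤ f i) s)
  have hsplit : ∑ i ∈ s, |f i|
      = ∑ i ∈ s with 0 ≤ f i, f i - ∑ i ∈ s with ¬0 ≤ f i, f i := by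
    rw [← sum_filter_add_sum_filter_not s (fun i => 0 ≤ f i), sub_eq_add_neg,
      ← sum_neg_distrib]
    congr 1 <;> refine sum_congr rfl fun i hi => ?_
    · exact abs_of_nonneg (mem_filter.mp hi).2
    · exact abs_of_neg (not_le.mp (mem_filter.mp hi).2)
  rw [hsplit]
  linarith [le_abs_self (∑ i ∈ s with 0 ≤ f i, f i), neg_abs_le (∑ i ∈ s with ¬0 ≤ f i, f i)]

namespace AbsolutelyContinuousIF

variable {g : ℝ → ℝ → ℝ} {c d : ℝ}

theorem exists_abs_sum_lt {ι : Type*} (hg : AbsolutelyContinuousIF g c d) {ε : ℝ} (hε : 0 < ε) :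
    ∃ δ > 0, ∀ (s : Finset ι) (a b : ι → ℝ),
      (∀ i ∈ s, c ≤ a i ∧ a i < b i ∧ b i ≤ d) →
      (∀ i ∈ s, ∀ j ∈ s, i ≠ j → b i ≤ a j ∨ b j ≤ a i) →
      ∑ i ∈ s, (b i - a i) < δ → |∑ i ∈ s, g (a i) (b i)| < ε := by
  obtain ⟨δ, hδ, hg⟩ := hg ε hε
  refine ⟨δ, hδ, fun s a b hsub hdisj hlen => ?_⟩
  rcases isEmpty_or_nonempty ι with hι | hι
  · simpa [s.eq_empty_of_isEmpty] using hε
  obtain ⟨σ, hσ⟩ := s.exists_bijOn_range_card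
  have reindex : ∀ f : ι → ℝ, ∑ k ∈ range #s, f (σ k) = ∑ i ∈ s, f i := fun f =>
    sum_nbij σ hσ.mapsTo hσ.injOn (by simpa using hσ.surjOn) fun _ _ => rfl
  rw [← reindex] at hlen ⊢
  refine hg #s (a ∘ σ) (b ∘ σ) (fun k hk => hsub _ (hσ.mapsTo (mem_range.mpr hk)))
    (fun k hk l hl hkl => hdisj _ (hσ.mapsTo (mem_range.mpr hk)) _
      (hσ.mapsTo (mem_range.mpr hl)) fun h => hkl ?_) hlen
  exact hσ.injOn (by simpa using hk) (by simpa using hl) h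

theorem exists_sum_abs_lt {ι : Type*} (hg : AbsolutelyContinuousIF g c d) {ε : ℝ} (hε : 0 < ε) :
    ∃ δ > 0, ∀ (s : Finset ι) (a b : ι → ℝ),
      (∀ i ∈ s, c ≤ a i ∧ a i < b i ∧ b i ≤ d) →
      (∀ i ∈ s, ∀ j ∈ s, i ≠ j → b i ≤ a j ∨ b j ≤ a i) →
      ∑ i ∈ s, (b i - a i) < δ → ∑ i ∈ s, |g (a i) (b i)| < 2 * ε := by
  obtain ⟨δ, hδ, hg⟩ := hg.exists_abs_sum_lt (ι := ι) hε
  refine ⟨δ, hδ, fun s a b hsub hdisj hlen => sum_abs_lt_two_mul fun t hts => ?_⟩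
  refine hg t a b (fun i hi => hsub i (hts hi))
    (fun i hi j hj => hdisj i (hts hi) j (hts hj)) (lt_of_le_of_lt ?_ hlen)
  exact sum_le_sum_of_subset_of_nonneg hts fun i hi _ => sub_nonneg.mpr (hsub i hi).2.1.le

end AbsolutelyContinuousIF

namespace Division

variable {a b : ℝ} (D : Division a b)

theorem strictMonoOn : StrictMonoOn D.P (Set.Iic D.n) :=
  strictMonoOn_Iic_of_lt_succ fun i hi => by simpa using D.mono i hi

theorem mem_Icc {i : ℕ} (hi : i ≤ D.n) : D.P i ∈ Set.Icc a b :=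
  ⟨D.first.symm.trans_le (D.strictMonoOn.monotoneOn (by simp) (by simpa using hi) i.zero_le),
    (D.strictMonoOn.monotoneOn (by simpa using hi) (by simp) hi).trans_eq D.last⟩

theorem interval_subset {i : ℕ} (hi : i < D.n) :
    a ≤ D.P i ∧ D.P i < D.P (i + 1) ∧ D.P (i + 1) ≤ b :=
  ⟨(D.mem_Icc hi.le).1, D.mono i hi, (D.mem_Icc hi).2⟩

theorem nonoverlapping {i j : ℕ} (hi : i < D.n) (hj : j < D.n) (hij : i ≠ j) :
    D.P (i + 1) ≤ D.P j ∨ D.P (j + 1) ≤ D.P i := by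
  have hle : ∀ {k l : ℕ}, k < l → l < D.n → D.P (k + 1) ≤ D.P l := fun hkl hl =>
    D.strictMonoOn.monotoneOn (by simp; omega) (by simp; omega) hkl
  rcases hij.lt_or_gt with h | h
  · exact .inl (hle h hj)
  · exact .inr (hle h hi)

theorem normLt.mono {D : Division a b} {e e' : ℝ} (hD : D.normLt e) (he : e ≤ e') :
    D.normLt e' :=
  fun i hi => (hD i hi).trans_le he

theorem normLt.pos {D : Division a b} {e : ℝ} (hD : D.normLt e) : 0 < e :=
  (sub_pos.mpr (D.mono 0 D.npos)).trans (hD 0 D.npos)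

theorem exists_normLt (hab : a < b) {e : ℝ} (he : 0 < e) : ∃ D : Division a b, D.normLt e := by
  obtain ⟨n, hn⟩ := exists_nat_gt ((b - a) / e)
  have hn0 : (0 : ℝ) < n := (div_pos (sub_pos.mpr hab) he).trans hn
  have hstep : 0 < (b - a) / n := div_pos (sub_pos.mpr hab) hn0
  refine ⟨⟨n, fun i => a + i * ((b - a) / n), by exact_mod_cast hn0, fun i _ => ?_, by simp,
    by field_simp; ring⟩, fun i _ => ?_⟩
  · push_cast; linarith
  · push_cast
    rw [div_lt_iff₀ he] at hn
    rw [add_one_mul, add_sub_add_left_eq_sub, add_sub_cancel_left, div_lt_iff₀ hn0]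
    linarith

theorem sum_length_floor_eq_lt {η : ℝ} (hD : D.normLt η) (k : ℕ) :
    ∑ i ∈ range D.n with ⌊(D.P i - a) / η⌋₊ = k, (D.P (i + 1) - D.P i) < 2 * η := by
  set s := {i ∈ range D.n | ⌊(D.P i - a) / η⌋₊ = k}
  have hη := hD.pos
  rcases s.eq_empty_or_nonempty with hs | hs
  · rw [hs, sum_empty]; positivity
  have hsn : ∀ i ∈ s, i < D.n := fun i hi => mem_range.mp (mem_filter.mp hi).1
  have hcell : ∀ i ∈ s, a + k * η ≤ D.P i ∧ D.P i < a + (k + 1) * η := fun i hi => by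
    have hfl := (Nat.floor_eq_iff (div_nonneg (sub_nonneg.mpr (D.mem_Icc (hsn i hi).le).1)
      hη.le)).mp (mem_filter.mp hi).2
    rw [le_div_iff₀ hη, div_lt_iff₀ hη] at hfl
    constructor <;> linarith [hfl.1, hfl.2]
  have hlo := hcell _ (s.min'_mem hs)
  have hhi := hcell _ (s.max'_mem hs)
  have hmax := hD _ (hsn _ (s.max'_mem hs))
  calc ∑ i ∈ s, (D.P (i + 1) - D.P i)
      ≤ ∑ i ∈ Icc (s.min' hs) (s.max' hs), (D.P (i + 1) - D.P i) := by
        refine sum_le_sum_of_subset_of_nonneg (fun i hi => Finset.mem_Icc.mpr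
          ⟨s.min'_le i hi, s.le_max' i hi⟩) fun i hi _ => sub_nonneg.mpr (D.mono i ?_).le
        exact (Finset.mem_Icc.mp hi).2.trans_lt (hsn _ (s.max'_mem hs))
    _ = D.P (s.max' hs + 1) - D.P (s.min' hs) := sum_Icc_sub (s.min'_le_max' hs) D.P
    _ < 2 * η := by linarith

end Division

theorem AbsolutelyContinuousIF.exists_sum_abs_le {g : ℝ → ℝ → ℝ} {c d : ℝ}
    (hg : AbsolutelyContinuousIF g c d) :
    ∃ δ > 0, ∃ C : ℝ, ∀ D : Division c d, D.normLt δ →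
      ∑ i ∈ range D.n, |g (D.P i) (D.P (i + 1))| ≤ C := by
  obtain ⟨δ, hδ, hsmall⟩ := hg.exists_sum_abs_lt (ι := ℕ) one_pos
  set η := δ / 2
  set cell : ℝ → ℕ := fun x => ⌊(x - c) / η⌋₊
  refine ⟨η, by positivity, (cell d + 1) * 2, fun D hD => ?_⟩
  have hcell : ∀ i ∈ range D.n, cell (D.P i) ∈ range (cell d + 1) := fun i hi =>
    mem_range.mpr (Nat.lt_succ_of_le (Nat.floor_le_floor (by
      gcongr; exact (D.mem_Icc (mem_range.mp hi).le).2)))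
  rw [← sum_fiberwise_of_maps_to hcell]
  refine (sum_le_card_nsmul _ _ 2 fun k _ => ?_).trans_eq (by simp [nsmul_eq_mul])
  have hfiber : ∀ i ∈ {i ∈ range D.n | cell (D.P i) = k}, i < D.n := fun i hi =>
    mem_range.mp (mem_filter.mp hi).1
  refine (hsmall _ D.P (fun i => D.P (i + 1)) (fun i hi => D.interval_subset (hfiber i hi))
    (fun i hi j hj => D.nonoverlapping (hfiber i hi) (hfiber j hj)) ?_).le.trans (by norm_num)
  exact (D.sum_length_floor_eq_lt hD k).trans_eq (mul_div_cancel₀ δ two_ne_zero)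

section NormLimits

variable {g : ℝ → ℝ → ℝ} {a b δ C : ℝ}

theorem upperNormLimit_le (hδ : 0 < δ) (h : ∀ D : Division a b, D.normLt δ → D.sum g ≤ C) :
    upperNormLimit g a b ≤ C :=
  iInf_le_of_le ⟨δ, hδ⟩ <| sSup_le <| by
    rintro _ ⟨D, hD, rfl⟩; exact EReal.coe_le_coe (h D hD)

theorem le_upperNormLimit (hab : a < b) (hδ : 0 < δ)
    (h : ∀ D : Division a b, D.normLt δ → C ≤ D.sum g) : (C : EReal) ≤ upperNormLimit g a b := by
  refine le_iInf fun e => ?_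
  obtain ⟨D, hD⟩ := Division.exists_normLt hab (lt_min e.2 hδ)
  exact (EReal.coe_le_coe (h D (hD.mono (min_le_right _ _)))).trans
    (le_sSup ⟨D, hD.mono (min_le_left _ _), rfl⟩)

theorem lowerNormLimit_le (hab : a < b) (hδ : 0 < δ)
    (h : ∀ D : Division a b, D.normLt δ → D.sum g ≤ C) : lowerNormLimit g a b ≤ C := by
  refine iSup_le fun e => ?_
  obtain ⟨D, hD⟩ := Division.exists_normLt hab (lt_min e.2 hδ)
  exact le_trans (b := (D.sum g : EReal)) (sInf_le ⟨D, hD.mono (min_le_left _ _), rfl⟩)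
    (EReal.coe_le_coe (h D (hD.mono (min_le_right _ _))))

theorem le_lowerNormLimit (hδ : 0 < δ) (h : ∀ D : Division a b, D.normLt δ → C ≤ D.sum g) :
    (C : EReal) ≤ lowerNormLimit g a b :=
  le_iSup_of_le ⟨δ, hδ⟩ <| le_sInf <| by
    rintro _ ⟨D, hD, rfl⟩; exact EReal.coe_le_coe (h D hD)

theorem variation_le (hδ : 0 < δ)
    (h : ∀ D : Division a b, D.normLt δ → ∑ i ∈ range D.n, |g (D.P i) (D.P (i + 1))| ≤ C) :
    variation g a b ≤ C :=
  iInf_le_of_le ⟨δ, hδ⟩ <| sSup_le <| by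
    rintro _ ⟨D, hD, rfl⟩; exact EReal.coe_le_coe (h D hD)

end NormLimits

theorem EReal.exists_eq_coe_of_coe_le_of_le_coe {x : EReal} {l u : ℝ} (hl : (l : EReal) ≤ x)
    (hu : x ≤ u) : ∃ r : ℝ, x = r :=
  ⟨x.toReal, (EReal.coe_toReal (ne_top_of_le_ne_top (EReal.coe_ne_top u) hu)
    (ne_bot_of_le_ne_bot (EReal.coe_ne_bot l) hl)).symm⟩

/-- (2.1) and Corollary: If `g` is absolutely continuous on `[c, d]` and `g ≥ 0`, then the
upper norm-limit of `g` over `[c, d]` is finite.  Consequently every absolutely continuous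
interval function has finite upper and lower norm-limits and finite variation: absolute
continuity implies bounded variation. -/
theorem absolutelyContinuous_implies_boundedVariation (g : ℝ → ℝ → ℝ) (c d : ℝ)
    (hcd : c < d) :
    (AbsolutelyContinuousIF g c d → (∀ x y : ℝ, c ≤ x → x < y → y ≤ d → 0 ≤ g x y) →
      upperNormLimit g c d ≠ ⊤) ∧
    (AbsolutelyContinuousIF g c d →
      (∃ u : ℝ, upperNormLimit g c d = (u : EReal)) ∧
      (∃ l : ℝ, lowerNormLimit g c d = (l : EReal)) ∧
      variation g c d ≠ ⊤) := by
  have bounded (hg : AbsolutelyContinuousIF g c d) :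
      (∃ u : ℝ, upperNormLimit g c d = (u : EReal)) ∧
      (∃ l : ℝ, lowerNormLimit g c d = (l : EReal)) ∧ variation g c d ≠ ⊤ := by
    obtain ⟨δ, hδ, C, hC⟩ := hg.exists_sum_abs_le
    have habs : ∀ D : Division c d, D.normLt δ → |D.sum g| ≤ C := fun D hD =>
      (abs_sum_le_sum_abs _ _).trans (hC D hD)
    have hle : ∀ D : Division c d, D.normLt δ → D.sum g ≤ C := fun D hD =>
      le_of_abs_le (habs D hD)
    have hge : ∀ D : Division c d, D.normLt δ → -C ≤ D.sum g := fun D hD =>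
      neg_le_of_abs_le (habs D hD)
    exact ⟨EReal.exists_eq_coe_of_coe_le_of_le_coe (le_upperNormLimit hcd hδ hge)
        (upperNormLimit_le hδ hle),
      EReal.exists_eq_coe_of_coe_le_of_le_coe (le_lowerNormLimit hδ hge)
        (lowerNormLimit_le hcd hδ hle),
      ((variation_le hδ hC).trans_lt (EReal.coe_lt_top C)).ne⟩
  refine ⟨fun hg _ => ?_, bounded⟩
  obtain ⟨⟨u, hu⟩, -⟩ := bounded hg
  exact hu ▸ EReal.coe_ne_top u
end
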